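/- If R_λ maps C₀(E) into C₀(E) for some (equivalently all) λ > 0, and the range R C₀(E) is dense in C₀(E), then U_t maps C₀(E) into C₀(E) for all t ≥ 0. -/

import Mathlib

open MeasureTheory ProbabilityTheory Filter Topology Set

/-- The semigroup of a Markov process, given by its transition kernels:
`Usg κ t f x = E_x[f(X_t)] = ∫ f(y) κ_t(x, dy)`. -/
noncomputable def Usg {E : Type*} [MeasurableSpace E] (κ : ℝ → Kernel E E)
    (t : ℝ) (f : E → ℝ) (x : E) : ℝ := ∫ y, f y ∂(κ t x)

/-- The resolvent `R_λ f x = ∫_0^∞ e^{-λ t} U_t f x dt`. -/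
noncomputable def Res {E : Type*} [MeasurableSpace E] (κ : ℝ → Kernel E E)
    (l : ℝ) (f : E → ℝ) (x : E) : ℝ :=
  ∫ t in Set.Ioi (0:ℝ), Real.exp (-l * t) * Usg κ t f x

/-- `f ∈ C₀(E)`: continuous and vanishing at infinity. -/
def MemC0 {E : Type*} [TopologicalSpace E] (f : E → ℝ) : Prop :=
  Continuous f ∧ Filter.Tendsto f (Filter.cocompact E) (nhds 0)

/-!
For `g ∈ C₀(E)` the semigroup property gives
`U_t R_λ g (x) = e^{λt} ∫_t^∞ e^{-λr} U_r g (x) dr`.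
By Weierstrass in the variable `y = e^{-λr}`, the weight `1_{r > t} e^{-λr}` is the
`L¹(0, ∞)`-limit of functions `e^{-λr} p(e^{-λr}) = ∑ₖ cₖ e^{-(k+1)λr}`, so `U_t R_λ g` is a uniform
limit of linear combinations of the `R_{(k+1)λ} g`. These lie in `C₀(E)`: by the resolvent
equation, `R_μ = ∑ₖ (ν - μ)ᵏ R_ν^{k+1}` whenever `|ν - μ| < ν`, which propagates `R_ν C₀ ⊆ C₀`
from `ν = λ` to every `μ > 0`. Finally `U_t` is a contraction, `R_λ C₀(E)` is dense and `C₀(E)` is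
closed under uniform limits, so `U_t f ∈ C₀(E)` for every `f ∈ C₀(E)`.
-/

namespace MemC0

variable {E : Type*} [TopologicalSpace E]

theorem exists_bound {f : E → ℝ} (hf : MemC0 f) : ∃ D, 0 ≤ D ∧ ∀ x, |f x| ≤ D := by
  obtain ⟨K, hK, hKf⟩ := hasBasis_cocompact.eventually_iff.mp
    (hf.2.eventually (Metric.ball_mem_nhds 0 one_pos))
  obtain ⟨C, hC⟩ := hK.exists_bound_of_continuousOn hf.1.continuousOn
  refine ⟨max C 1, le_max_of_le_right zero_le_one, fun x => ?_⟩
  by_cases hx : x ∈ K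
  · exact le_max_of_le_left (hC x hx)
  · simpa using le_max_of_le_right (hKf hx).le

theorem of_forall_approx {f : E → ℝ}
    (h : ∀ ε, 0 < ε → ∃ g, MemC0 g ∧ ∀ x, |g x - f x| ≤ ε) : MemC0 f := by
  refine ⟨continuous_of_uniform_approx_of_continuous fun u hu => ?_, ?_⟩
  · obtain ⟨ε, hε, hεu⟩ := Metric.mem_uniformity_dist.mp hu
    obtain ⟨g, hg, hgf⟩ := h (ε / 2) (half_pos hε)
    exact ⟨g, hg.1, fun x => hεu ((abs_sub_comm _ _).trans_le (hgf x) |>.trans_lt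
      (half_lt_self hε))⟩
  · refine Metric.tendsto_nhds.mpr fun ε hε => ?_
    obtain ⟨g, hg, hgf⟩ := h (ε / 2) (half_pos hε)
    filter_upwards [Metric.tendsto_nhds.mp hg.2 (ε / 2) (half_pos hε)] with x hx
    rw [Real.dist_0_eq_abs] at hx ⊢
    linarith [abs_sub_abs_le_abs_sub (f x) (g x), abs_sub_comm (f x) (g x), hgf x]

theorem const_mul {f : E → ℝ} (c : ℝ) (hf : MemC0 f) : MemC0 fun x => c * f x :=
  ⟨continuous_const.mul hf.1, by simpa using hf.2.const_mul c⟩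

theorem add {f g : E → ℝ} (hf : MemC0 f) (hg : MemC0 g) : MemC0 fun x => f x + g x :=
  ⟨hf.1.add hg.1, by simpa using hf.2.add hg.2⟩

theorem sum {ι : Type*} (s : Finset ι) {f : ι → E → ℝ} (h : ∀ i ∈ s, MemC0 (f i)) :
    MemC0 fun x => ∑ i ∈ s, f i x := by
  classical
  induction s using Finset.induction_on with
  | empty => exact ⟨continuous_const, by simpa using tendsto_const_nhds⟩
  | insert a s ha ih =>
    simp only [Finset.sum_insert ha]
    exact (h a (Finset.mem_insert_self a s)).add
      (ih fun i hi => h i (Finset.mem_insert_of_mem hi))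

end MemC0

open Real

theorem integral_exp_neg_mul_Ioi {b : ℝ} (hb : 0 < b) (a : ℝ) :
    ∫ u in Ioi a, exp (-b * u) = exp (-b * a) / b := by
  rw [integral_exp_mul_Ioi (neg_lt_zero.2 hb), neg_div_neg_eq]

theorem integral_Ioo_exp_mul {c : ℝ} (hc : c ≠ 0) {r : ℝ} (hr : 0 ≤ r) :
    ∫ s in Ioo 0 r, exp (c * s) = (exp (c * r) - 1) / c := by
  rw [← integral_Ioc_eq_integral_Ioo, ← intervalIntegral.integral_of_le hr,
    intervalIntegral.integral_comp_mul_left (fun s => exp s) hc, integral_exp]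
  simp [div_eq_inv_mul]

theorem integral_Ioi_comp_const_add (F : ℝ → ℝ) (s : ℝ) :
    ∫ u in Ioi 0, F (s + u) = ∫ r in Ioi s, F r := by
  simpa [preimage_const_add_Ioi] using
    (measurePreserving_add_left volume s).setIntegral_preimage_emb
      (measurableEmbedding_addLeft s) F (Ioi s)

theorem setIntegral_Ioi_eq_setIntegral_indicator {F : ℝ → ℝ} {s : ℝ} (hs : 0 ≤ s) :
    ∫ r in Ioi s, F r = ∫ r in Ioi 0, (Ioi s).indicator F r := by
  rw [setIntegral_indicator measurableSet_Ioi, inter_eq_self_of_subset_right (Ioi_subset_Ioi hs)]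

theorem abs_integral_mul_sub_integral_mul_le {α : Type*} [MeasurableSpace α] {μ : Measure α}
    {W V h : α → ℝ} {C : ℝ} (hW : Integrable W μ) (hV : Integrable V μ)
    (hm : AEStronglyMeasurable h μ) (hC : ∀ᵐ x ∂μ, |h x| ≤ C) :
    |∫ x, W x * h x ∂μ - ∫ x, V x * h x ∂μ| ≤ C * ∫ x, |W x - V x| ∂μ := by
  rw [← integral_sub (hW.mul_bdd hm hC) (hV.mul_bdd hm hC), ← integral_const_mul]
  simp_rw [← sub_mul]
  refine abs_integral_le_integral_abs.trans (integral_mono_ae ((hW.sub hV).mul_bdd hm hC).abs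
    ((hW.sub hV).abs.const_mul C) ?_)
  filter_upwards [hC] with x hx
  rw [abs_mul, mul_comm]
  exact mul_le_mul_of_nonneg_right hx (abs_nonneg _)

noncomputable def laplace (h : ℝ → ℝ) (μ : ℝ) : ℝ := ∫ r in Ioi 0, exp (-μ * r) * h r

theorem laplace_comp_const_add (h : ℝ → ℝ) (μ s : ℝ) :
    laplace (fun u => h (s + u)) μ = exp (μ * s) * ∫ r in Ioi s, exp (-μ * r) * h r := by
  rw [← integral_const_mul, ← integral_Ioi_comp_const_add]
  refine setIntegral_congr_fun measurableSet_Ioi fun u _ => ?_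
  rw [← mul_assoc, ← exp_add]
  ring_nf

section BoundedOnIoi

variable {h : ℝ → ℝ} {C μ ν : ℝ}

theorem integrableOn_exp_neg_mul_mul (hm : Measurable h) (hC : ∀ r, 0 < r → |h r| ≤ C)
    (hμ : 0 < μ) : IntegrableOn (fun r => exp (-μ * r) * h r) (Ioi 0) :=
  (exp_neg_integrableOn_Ioi 0 hμ).mul_bdd hm.aestronglyMeasurable
    ((ae_restrict_iff' measurableSet_Ioi).2 (Eventually.of_forall hC))

theorem integral_norm_exp_neg_mul_mul_le (hm : Measurable h) (hC : ∀ r, 0 < r → |h r| ≤ C)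
    (hμ : 0 < μ) : ∫ r in Ioi 0, ‖exp (-μ * r) * h r‖ ≤ C / μ :=
  calc ∫ r in Ioi 0, ‖exp (-μ * r) * h r‖ ≤ ∫ r in Ioi 0, C * exp (-μ * r) := by
        refine setIntegral_mono_on (integrableOn_exp_neg_mul_mul hm hC hμ).norm
          ((exp_neg_integrableOn_Ioi 0 hμ).const_mul C) measurableSet_Ioi fun r hr => ?_
        rw [norm_mul, norm_of_nonneg (exp_pos _).le, mul_comm]
        exact mul_le_mul_of_nonneg_right (hC r hr) (exp_pos _).le
    _ = C / μ := by rw [integral_const_mul, integral_exp_neg_mul_Ioi hμ]; simp [div_eq_mul_inv]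

theorem abs_laplace_le (hm : Measurable h) (hC : ∀ r, 0 < r → |h r| ≤ C) (hμ : 0 < μ) :
    |laplace h μ| ≤ C / μ :=
  (norm_integral_le_integral_norm _).trans (integral_norm_exp_neg_mul_mul_le hm hC hμ)

theorem integrable_ite_lt_exp_mul_exp_mul (hm : Measurable h) (hC : ∀ r, 0 < r → |h r| ≤ C)
    (hμ : 0 < μ) (hν : 0 < ν) :
    Integrable (fun p : ℝ × ℝ =>
        if p.1 < p.2 then exp ((ν - μ) * p.1) * (exp (-ν * p.2) * h p.2) else 0)
      ((volume.restrict (Ioi 0)).prod (volume.restrict (Ioi 0))) := by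
  have hC0 : 0 ≤ C := (abs_nonneg _).trans (hC 1 one_pos)
  set b := min μ ν / 2 with hb_def
  have hb : 0 < b := by positivity
  refine Integrable.mono' (((exp_neg_integrableOn_Ioi 0 hb).mul_prod
    (exp_neg_integrableOn_Ioi 0 hb)).const_mul C) ?_ ?_
  · exact (Measurable.ite (measurableSet_lt measurable_fst measurable_snd) (by fun_prop)
      measurable_const).aestronglyMeasurable
  rw [Measure.prod_restrict]
  filter_upwards [ae_restrict_mem (measurableSet_Ioi.prod measurableSet_Ioi)] with ⟨s, r⟩ ⟨hs, hr⟩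
  simp only [mem_Ioi] at hs hr
  by_cases hsr : s < r
  · have hexp : (ν - μ) * s + -ν * r ≤ -b * s + -b * r := by
      have := mul_nonneg (le_min hμ.le hν.le) (sub_nonneg.2 hsr.le)
      nlinarith [mul_le_mul_of_nonneg_right (min_le_left μ ν) hs.le,
        mul_le_mul_of_nonneg_right (min_le_right μ ν) (sub_nonneg.2 hsr.le)]
    simp only [if_pos hsr, norm_mul, norm_of_nonneg (exp_pos _).le, Real.norm_eq_abs]
    calc exp ((ν - μ) * s) * (exp (-ν * r) * |h r|)
        ≤ exp ((ν - μ) * s) * (exp (-ν * r) * C) := by gcongr; exact hC r hr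
      _ = C * exp ((ν - μ) * s + -ν * r) := by rw [exp_add]; ring
      _ ≤ C * (exp (-b * s) * exp (-b * r)) := by rw [← exp_add]; gcongr
  · simp only [if_neg hsr, norm_zero]
    positivity

theorem laplace_laplace_comp_const_add (hm : Measurable h) (hC : ∀ r, 0 < r → |h r| ≤ C)
    (hμ : 0 < μ) (hν : 0 < ν) (hne : ν ≠ μ) :
    laplace (fun s => laplace (fun u => h (s + u)) ν) μ
      = (laplace h μ - laplace h ν) / (ν - μ) := by
  set m := volume.restrict (Ioi (0 : ℝ))
  -- After substituting `r = s + u`, Fubini on the triangle `0 < s < r`.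
  set F : ℝ × ℝ → ℝ := fun p =>
    if p.1 < p.2 then exp ((ν - μ) * p.1) * (exp (-ν * p.2) * h p.2) else 0
  have hleft : ∀ s ∈ Ioi (0 : ℝ),
      exp (-μ * s) * laplace (fun u => h (s + u)) ν = ∫ r, F (s, r) ∂m := by
    intro s hs
    rw [laplace_comp_const_add, setIntegral_Ioi_eq_setIntegral_indicator (le_of_lt hs),
      ← mul_assoc, ← exp_add, ← integral_const_mul]
    refine integral_congr_ae (Eventually.of_forall fun r => ?_)
    simp only [F, indicator_apply, mem_Ioi]
    split_ifs <;> ring_nf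
  have hright : ∀ r ∈ Ioi (0 : ℝ),
      ∫ s, F (s, r) ∂m = (exp (-μ * r) * h r - exp (-ν * r) * h r) / (ν - μ) := by
    intro r hr
    have hind : (fun s => F (s, r))
        = (Iio r).indicator fun s => exp ((ν - μ) * s) * (exp (-ν * r) * h r) := by
      ext s; simp only [F, indicator_apply, mem_Iio]
    rw [hind, setIntegral_indicator measurableSet_Iio, Ioi_inter_Iio, integral_mul_const,
      integral_Ioo_exp_mul (sub_ne_zero.2 hne) (le_of_lt hr), div_mul_eq_mul_div, sub_mul,
      ← mul_assoc, ← exp_add]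
    ring_nf
  calc laplace (fun s => laplace (fun u => h (s + u)) ν) μ = ∫ s, ∫ r, F (s, r) ∂m ∂m :=
        setIntegral_congr_fun measurableSet_Ioi hleft
    _ = ∫ r, ∫ s, F (s, r) ∂m ∂m :=
        integral_integral_swap (integrable_ite_lt_exp_mul_exp_mul hm hC hμ hν)
    _ = ∫ r in Ioi 0, (exp (-μ * r) * h r - exp (-ν * r) * h r) / (ν - μ) :=
        setIntegral_congr_fun measurableSet_Ioi hright
    _ = (laplace h μ - laplace h ν) / (ν - μ) := by
        rw [integral_div, integral_sub (integrableOn_exp_neg_mul_mul hm hC hμ)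
          (integrableOn_exp_neg_mul_mul hm hC hν)]
        rfl

end BoundedOnIoi

theorem exp_mul_eval_exp (p : Polynomial ℝ) (l u : ℝ) :
    exp (-l * u) * p.eval (exp (-l * u))
      = ∑ k ∈ Finset.range (p.natDegree + 1), p.coeff k * exp (-((k + 1) * l) * u) := by
  rw [Polynomial.eval_eq_sum_range, Finset.mul_sum]
  refine Finset.sum_congr rfl fun k _ => ?_
  rw [mul_left_comm, ← pow_succ', ← exp_nat_mul]
  push_cast
  ring_nf

theorem integrableOn_exp_mul_eval_exp (p : Polynomial ℝ) {l : ℝ} (hl : 0 < l) :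
    IntegrableOn (fun u => exp (-l * u) * p.eval (exp (-l * u))) (Ioi 0) := by
  simp_rw [exp_mul_eval_exp]
  exact integrable_finsetSum _ fun k _ =>
    (exp_neg_integrableOn_Ioi 0 (by positivity)).const_mul _

theorem integral_exp_mul_eval_exp_mul {h : ℝ → ℝ} {C : ℝ} (p : Polynomial ℝ) (hm : Measurable h)
    (hC : ∀ r, 0 < r → |h r| ≤ C) {l : ℝ} (hl : 0 < l) :
    ∫ r in Ioi 0, exp (-l * r) * p.eval (exp (-l * r)) * h r
      = ∑ k ∈ Finset.range (p.natDegree + 1), p.coeff k * laplace h ((k + 1) * l) := by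
  simp_rw [exp_mul_eval_exp, Finset.sum_mul, mul_assoc]
  rw [integral_finsetSum _ fun k _ =>
    (integrableOn_exp_neg_mul_mul hm hC (by positivity)).const_mul _]
  simp_rw [integral_const_mul]
  rfl

theorem exists_polynomial_abs_sub_indicator_le {l t δ : ℝ} (hl : 0 < l) (hδ : 0 < δ) :
    ∃ p : Polynomial ℝ, ∀ u, 0 < u →
      |exp (-l * u) * p.eval (exp (-l * u)) - (Ioi t).indicator (fun u => exp (-l * u)) u|
        ≤ l * δ * exp (-l * u) + (Ioc t (t + δ)).indicator 1 u := by
  set c := exp (-l * t)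
  set c' := exp (-l * (t + δ))
  have hcc' : c' < c := exp_lt_exp.2 (by nlinarith)
  -- A continuous ramp in `y = exp (-l * u)` which agrees with `1_{u > t}` off `t < u ≤ t + δ`.
  set φ : ℝ → ℝ := fun y => min 1 (max 0 ((c - y) / (c - c')))
  have hφ : Continuous φ := by fun_prop (disch := exact (sub_pos.2 hcc').ne')
  have hφ_sub : ∀ u,
      |φ (exp (-l * u)) - (Ioi t).indicator 1 u| ≤ (Ioc t (t + δ)).indicator 1 u := by
    intro u
    simp only [φ, indicator_apply, mem_Ioi, mem_Ioc, Pi.one_apply]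
    rcases le_or_gt u t with hut | htu
    · have : c ≤ exp (-l * u) := exp_le_exp.2 (by nlinarith)
      have : (c - exp (-l * u)) / (c - c') ≤ 0 :=
        div_nonpos_of_nonpos_of_nonneg (by linarith) (by linarith)
      rw [if_neg (not_lt.2 hut), if_neg fun h => (not_lt.2 hut) h.1, max_eq_left this,
        min_eq_right zero_le_one, sub_zero, abs_zero]
    rcases le_or_gt u (t + δ) with hut' | hut'
    · rw [if_pos htu, if_pos ⟨htu, hut'⟩, abs_le]
      constructor <;> simp
    · have : exp (-l * u) < c' := exp_lt_exp.2 (by nlinarith)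
      have : 1 ≤ (c - exp (-l * u)) / (c - c') := (one_le_div (by linarith)).2 (by linarith)
      rw [if_pos htu, if_neg fun h => (not_le.2 hut') h.2, max_eq_right (zero_le_one.trans this),
        min_eq_left this, sub_self, abs_zero]
  obtain ⟨p, hp⟩ := exists_polynomial_near_of_continuousOn 0 1 φ hφ.continuousOn (l * δ)
    (by positivity)
  refine ⟨p, fun u hu => ?_⟩
  have hy : exp (-l * u) ∈ Icc (0 : ℝ) 1 := ⟨(exp_pos _).le, exp_le_one_iff.2 (by nlinarith)⟩
  have hsplit : exp (-l * u) * p.eval (exp (-l * u)) - (Ioi t).indicator (fun u => exp (-l * u)) u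
      = exp (-l * u) * (p.eval (exp (-l * u)) - φ (exp (-l * u)))
        + exp (-l * u) * (φ (exp (-l * u)) - (Ioi t).indicator 1 u) := by
    simp only [indicator_apply, Pi.one_apply]
    split_ifs <;> ring
  rw [hsplit]
  refine (abs_add_le _ _).trans (add_le_add ?_ ?_) <;> rw [abs_mul, abs_of_pos (exp_pos _)]
  · rw [mul_comm]
    gcongr
    exact (hp _ hy).le
  · exact (mul_le_of_le_one_left (abs_nonneg _) hy.2).trans (hφ_sub u)

theorem exists_polynomial_integral_abs_sub_indicator_le {l t ε : ℝ} (hl : 0 < l) (ht : 0 ≤ t)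
    (hε : 0 < ε) : ∃ p : Polynomial ℝ, ∫ u in Ioi 0,
      |exp (-l * u) * p.eval (exp (-l * u)) - (Ioi t).indicator (fun u => exp (-l * u)) u| ≤ ε := by
  have hδ : 0 < ε / 2 := half_pos hε
  obtain ⟨p, hp⟩ := exists_polynomial_abs_sub_indicator_le (t := t) hl hδ
  have hind : IntegrableOn ((Ioc t (t + ε / 2)).indicator 1) (Ioi 0) :=
    (integrable_indicator_iff measurableSet_Ioc).2
      (integrableOn_const measure_Ioc_lt_top.ne (C := (1 : ℝ))) |>.integrableOn
  have hV : IntegrableOn ((Ioi t).indicator fun u => exp (-l * u)) (Ioi 0) :=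
    ((exp_neg_integrableOn_Ioi t hl).integrable_indicator measurableSet_Ioi).integrableOn
  refine ⟨p, ?_⟩
  calc _ ≤ ∫ u in Ioi 0, l * (ε / 2) * exp (-l * u) + (Ioc t (t + ε / 2)).indicator 1 u :=
        setIntegral_mono_on ((integrableOn_exp_mul_eval_exp p hl).sub hV).abs
          (((exp_neg_integrableOn_Ioi 0 hl).const_mul _).add hind) measurableSet_Ioi hp
    _ = ε / 2 + ε / 2 := by
        rw [integral_add ((exp_neg_integrableOn_Ioi 0 hl).const_mul _) hind, integral_const_mul,
          integral_exp_neg_mul_Ioi hl, setIntegral_indicator measurableSet_Ioc,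
          inter_eq_self_of_subset_right
            (show Ioc t (t + ε / 2) ⊆ Ioi 0 from fun u hu => ht.trans_lt hu.1)]
        simp [max_eq_left hδ.le, mul_comm l, hl.ne']
    _ = ε := add_halves ε

section MarkovSemigroup

variable {E : Type*} [MeasurableSpace E] {κ : ℝ → Kernel E E}
  (hk : ∀ t, 0 ≤ t → IsMarkovKernel (κ t))
  (hsemi : ∀ t s, 0 ≤ t → 0 ≤ s → κ (t + s) = (κ s).comp (κ t))
  (hjm : ∀ g : E → ℝ, Measurable g → (∃ D, ∀ x, |g x| ≤ D) →
    Measurable fun p : ℝ × E => Usg κ p.1 g p.2)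
  {g : E → ℝ} {D μ ν : ℝ}

theorem res_eq_laplace (ν : ℝ) (g : E → ℝ) (x : E) :
    Res κ ν g x = laplace (fun r => Usg κ r g x) ν := rfl

include hk in
theorem abs_usg_le {t : ℝ} (ht : 0 ≤ t) (hD : ∀ z, |g z| ≤ D) (x : E) : |Usg κ t g x| ≤ D := by
  have := hk t ht
  simpa [Usg] using norm_integral_le_of_norm_le_const (μ := κ t x)
    (Eventually.of_forall fun z => (norm_eq_abs _).trans_le (hD z))

include hk in
theorem usg_sub {t : ℝ} (ht : 0 ≤ t) {g' : E → ℝ} {D' : ℝ} (hg : Measurable g)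
    (hD : ∀ z, |g z| ≤ D) (hg' : Measurable g') (hD' : ∀ z, |g' z| ≤ D') (x : E) :
    Usg κ t (fun y => g y - g' y) x = Usg κ t g x - Usg κ t g' x := by
  have := hk t ht
  exact integral_sub (.of_bound hg.aestronglyMeasurable D (ae_of_all _ hD))
    (.of_bound hg'.aestronglyMeasurable D' (ae_of_all _ hD'))

include hk hsemi in
theorem usg_add {t s : ℝ} (ht : 0 ≤ t) (hs : 0 ≤ s) (hg : Measurable g) (hD : ∀ z, |g z| ≤ D)
    (x : E) : Usg κ (t + s) g x = Usg κ t (Usg κ s g) x := by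
  have := hk (t + s) (add_nonneg ht hs)
  unfold Usg
  rw [hsemi t s ht hs] at this ⊢
  exact Kernel.integral_comp <| Integrable.of_bound hg.aestronglyMeasurable D (ae_of_all _ hD)

include hjm in
theorem measurable_usg_time (hg : Measurable g) (hD : ∀ z, |g z| ≤ D) (x : E) :
    Measurable fun r => Usg κ r g x :=
  (hjm g hg ⟨D, hD⟩).comp (measurable_id.prodMk measurable_const)

include hjm in
theorem measurable_res (ν : ℝ) (hg : Measurable g) (hD : ∀ z, |g z| ≤ D) :
    Measurable (Res κ ν g) := by
  have hF : StronglyMeasurable fun p : E × ℝ => exp (-ν * p.2) * Usg κ p.2 g p.1 :=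
    (measurable_snd.const_mul (-ν)).exp.mul
      ((hjm g hg ⟨D, hD⟩).comp measurable_swap) |>.stronglyMeasurable
  exact (hF.integral_prod_right' (ν := volume.restrict (Ioi 0))).measurable

include hk hjm in
theorem abs_res_le (hν : 0 < ν) (hg : Measurable g) (hD : ∀ z, |g z| ≤ D) (x : E) :
    |Res κ ν g x| ≤ D / ν :=
  abs_laplace_le (measurable_usg_time hjm hg hD x) (fun _ hr => abs_usg_le hk hr.le hD x) hν

include hk hsemi hjm in
theorem usg_res {s : ℝ} (hs : 0 ≤ s) (hν : 0 < ν) (hg : Measurable g) (hD : ∀ z, |g z| ≤ D)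
    (x : E) : Usg κ s (Res κ ν g) x = laplace (fun u => Usg κ (s + u) g x) ν := by
  have := hk s hs
  set F : E × ℝ → ℝ := fun p => exp (-ν * p.2) * Usg κ p.2 g p.1
  have hFm : Measurable F :=
    (measurable_snd.const_mul (-ν)).exp.mul ((hjm g hg ⟨D, hD⟩).comp measurable_swap)
  have hF : Integrable F ((κ s x).prod (volume.restrict (Ioi 0))) := by
    refine (integrable_prod_iff hFm.aestronglyMeasurable).2 ⟨Eventually.of_forall fun y =>
      integrableOn_exp_neg_mul_mul (measurable_usg_time hjm hg hD y)
        (fun _ hr => abs_usg_le hk hr.le hD y) hν, ?_⟩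
    refine .of_bound hFm.norm.stronglyMeasurable.integral_prod_right'.aestronglyMeasurable (D / ν)
      (Eventually.of_forall fun y => ?_)
    rw [norm_of_nonneg (integral_nonneg fun _ => norm_nonneg _)]
    exact integral_norm_exp_neg_mul_mul_le (measurable_usg_time hjm hg hD y)
      (fun _ hr => abs_usg_le hk hr.le hD y) hν
  refine (integral_integral_swap hF).trans (setIntegral_congr_fun measurableSet_Ioi fun u hu => ?_)
  rw [integral_const_mul]
  exact congrArg _ (usg_add hk hsemi hs (le_of_lt hu) hg hD x).symm

include hk hsemi hjm in
theorem usg_res_eq_exp_mul_integral_indicator {t : ℝ} (ht : 0 ≤ t) (hν : 0 < ν)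
    (hg : Measurable g) (hD : ∀ z, |g z| ≤ D) (x : E) :
    Usg κ t (Res κ ν g) x
      = exp (ν * t) * ∫ r in Ioi 0, (Ioi t).indicator (fun r => exp (-ν * r)) r * Usg κ r g x := by
  rw [usg_res hk hsemi hjm ht hν hg hD, laplace_comp_const_add (fun r => Usg κ r g x),
    setIntegral_Ioi_eq_setIntegral_indicator ht]
  simp_rw [indicator_mul_left]

include hk hsemi hjm in
theorem res_res (hμ : 0 < μ) (hν : 0 < ν) (hne : ν ≠ μ) (hg : Measurable g)
    (hD : ∀ z, |g z| ≤ D) (x : E) :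
    Res κ μ (Res κ ν g) x = (Res κ μ g x - Res κ ν g x) / (ν - μ) := by
  rw [res_eq_laplace, res_eq_laplace μ, res_eq_laplace ν,
    ← laplace_laplace_comp_const_add (measurable_usg_time hjm hg hD x)
      (fun _ hr => abs_usg_le hk hr.le hD x) hμ hν hne]
  exact setIntegral_congr_fun measurableSet_Ioi fun s hs =>
    congrArg _ (usg_res hk hsemi hjm (le_of_lt hs) hν hg hD x)

include hk hjm in
theorem res_iterate_measurable_bounded (hν : 0 < ν) (hg : Measurable g) (hD : ∀ z, |g z| ≤ D)
    (k : ℕ) : Measurable ((Res κ ν)^[k] g) ∧ ∀ x, |(Res κ ν)^[k] g x| ≤ D / ν ^ k := by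
  induction k with
  | zero => simpa using ⟨hg, hD⟩
  | succ k ih =>
    rw [Function.iterate_succ_apply', pow_succ, ← div_div]
    exact ⟨measurable_res hjm ν ih.1 ih.2, abs_res_le hk hjm hν ih.1 ih.2⟩

section Resolvent

include hk hsemi hjm

theorem res_comm (hμ : 0 < μ) (hν : 0 < ν) (hg : Measurable g) (hD : ∀ z, |g z| ≤ D) (x : E) :
    Res κ μ (Res κ ν g) x = Res κ ν (Res κ μ g) x := by
  rcases eq_or_ne ν μ with rfl | hne
  · rfl
  rw [res_res hk hsemi hjm hμ hν hne hg hD, res_res hk hsemi hjm hν hμ hne.symm hg hD,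
    ← neg_sub μ ν, div_neg, ← neg_div, neg_sub]

theorem res_eq_res_add (hμ : 0 < μ) (hν : 0 < ν) (hg : Measurable g) (hD : ∀ z, |g z| ≤ D)
    (x : E) : Res κ μ g x = Res κ ν g x + (ν - μ) * Res κ ν (Res κ μ g) x := by
  rcases eq_or_ne ν μ with rfl | hne
  · simp
  rw [res_res hk hsemi hjm hν hμ hne.symm hg hD]
  field_simp [sub_ne_zero.2 hne.symm]
  ring

theorem res_iterate_res (hμ : 0 < μ) (hν : 0 < ν) (hg : Measurable g) (hD : ∀ z, |g z| ≤ D)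
    (k : ℕ) : (Res κ ν)^[k] (Res κ μ g) = Res κ μ ((Res κ ν)^[k] g) := by
  induction k with
  | zero => rfl
  | succ k ih =>
    obtain ⟨hm, hb⟩ := res_iterate_measurable_bounded hk hjm hν hg hD k
    ext x
    rw [Function.iterate_succ_apply', ih, Function.iterate_succ_apply',
      res_comm hk hsemi hjm hν hμ hm hb]

theorem res_eq_sum_add (hμ : 0 < μ) (hν : 0 < ν) (hg : Measurable g) (hD : ∀ z, |g z| ≤ D)
    (K : ℕ) (x : E) : Res κ μ g x = ∑ k ∈ Finset.range K, (ν - μ) ^ k * (Res κ ν)^[k + 1] g x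
      + (ν - μ) ^ K * (Res κ ν)^[K] (Res κ μ g) x := by
  induction K with
  | zero => simp
  | succ K ih =>
    obtain ⟨hm, hb⟩ := res_iterate_measurable_bounded hk hjm hν hg hD K
    have hstep : (Res κ ν)^[K] (Res κ μ g) x
        = (Res κ ν)^[K + 1] g x + (ν - μ) * (Res κ ν)^[K + 1] (Res κ μ g) x := by
      rw [res_iterate_res hk hsemi hjm hμ hν hg hD, res_eq_res_add hk hsemi hjm hμ hν hm hb,
        Function.iterate_succ_apply', Function.iterate_succ_apply',
        res_iterate_res hk hsemi hjm hμ hν hg hD]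
    rw [ih, hstep, Finset.sum_range_succ]
    ring

variable [TopologicalSpace E] [OpensMeasurableSpace E]

theorem memC0_res_of_lt_two_mul (hν : 0 < ν) (hR : ∀ f, MemC0 f → MemC0 (Res κ ν f))
    (hμ : 0 < μ) (hμν : μ < 2 * ν) (hg : MemC0 g) : MemC0 (Res κ μ g) := by
  obtain ⟨D, hD0, hD⟩ := hg.exists_bound
  have hgm : Measurable g := hg.1.measurable
  have hiter : ∀ k, MemC0 ((Res κ ν)^[k] g) := fun k => by
    induction k with
    | zero => exact hg
    | succ k ih => rw [Function.iterate_succ_apply']; exact hR _ ih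
  set q := |ν - μ| / ν
  have hq : q < 1 := by
    rw [div_lt_one hν, abs_lt]; constructor <;> linarith
  refine MemC0.of_forall_approx fun ε hε => ?_
  have hlim : Tendsto (fun K : ℕ => D / μ * q ^ K) atTop (𝓝 0) := by
    simpa using (tendsto_pow_atTop_nhds_zero_of_lt_one (by positivity) hq).const_mul (D / μ)
  obtain ⟨K, hK⟩ := (hlim.eventually (gt_mem_nhds hε)).exists
  refine ⟨fun x => ∑ k ∈ Finset.range K, (ν - μ) ^ k * (Res κ ν)^[k + 1] g x,
    MemC0.sum _ fun k _ => (hiter (k + 1)).const_mul _, fun x => ?_⟩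
  rw [res_eq_sum_add hk hsemi hjm hμ hν hgm hD K x, sub_add_cancel_left, abs_neg, abs_mul,
    abs_pow]
  have hrem := (res_iterate_measurable_bounded hk hjm hν (measurable_res hjm μ hgm hD)
    (abs_res_le hk hjm hμ hgm hD) K).2 x
  calc |ν - μ| ^ K * |(Res κ ν)^[K] (Res κ μ g) x| ≤ |ν - μ| ^ K * (D / μ / ν ^ K) := by gcongr
    _ = D / μ * q ^ K := by rw [div_pow]; field_simp
    _ ≤ ε := hK.le

variable {l : ℝ} (hl : 0 < l) (hR : ∀ f, MemC0 f → MemC0 (Res κ l f))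
include hl hR

theorem memC0_res_of_pos (hμ : 0 < μ) (hg : MemC0 g) : MemC0 (Res κ μ g) := by
  have hchain : ∀ k : ℕ, ∀ f, MemC0 f → MemC0 (Res κ (l * (3 / 2) ^ k) f) := by
    intro k
    induction k with
    | zero => simpa using hR
    | succ k ih =>
      refine fun f hf => memC0_res_of_lt_two_mul hk hsemi hjm (by positivity) ih (by positivity)
        ?_ hf
      rw [pow_succ]
      nlinarith [pow_pos (by norm_num : (0 : ℝ) < 3 / 2) k]
  obtain ⟨k, hk'⟩ := pow_unbounded_of_one_lt (μ / l) (by norm_num : (1 : ℝ) < 3 / 2)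
  refine memC0_res_of_lt_two_mul hk hsemi hjm (by positivity) (hchain k) hμ ?_ hg
  rw [div_lt_iff₀ hl] at hk'
  nlinarith [pow_pos (by norm_num : (0 : ℝ) < 3 / 2) k]

theorem memC0_usg_res {t : ℝ} (ht : 0 ≤ t) (hg : MemC0 g) : MemC0 (Usg κ t (Res κ l g)) := by
  obtain ⟨D, hD0, hD⟩ := hg.exists_bound
  have hgm : Measurable g := hg.1.measurable
  refine MemC0.of_forall_approx fun ε hε => ?_
  obtain ⟨p, hp⟩ := exists_polynomial_integral_abs_sub_indicator_le hl ht
    (ε := ε / (exp (l * t) * (D + 1))) (by positivity)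
  refine ⟨fun x => exp (l * t) * ∑ k ∈ Finset.range (p.natDegree + 1),
      p.coeff k * Res κ ((k + 1) * l) g x,
    MemC0.const_mul _ (MemC0.sum _ fun k _ => (memC0_res_of_pos hk hsemi hjm hl hR
      (by positivity) hg).const_mul _), fun x => ?_⟩
  have hm := measurable_usg_time hjm hgm hD x
  have hb : ∀ r, 0 < r → |Usg κ r g x| ≤ D := fun r hr => abs_usg_le hk hr.le hD x
  have hS : ∑ k ∈ Finset.range (p.natDegree + 1), p.coeff k * Res κ ((k + 1) * l) g x
      = ∫ r in Ioi 0, exp (-l * r) * p.eval (exp (-l * r)) * Usg κ r g x :=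
    (integral_exp_mul_eval_exp_mul p hm hb hl).symm
  dsimp only
  rw [hS, usg_res_eq_exp_mul_integral_indicator hk hsemi hjm ht hl hgm hD, ← mul_sub, abs_mul,
    abs_of_pos (exp_pos _)]
  calc _ ≤ exp (l * t) * (D * (ε / (exp (l * t) * (D + 1)))) := by
        gcongr
        refine (abs_integral_mul_sub_integral_mul_le (integrableOn_exp_mul_eval_exp p hl)
          ((exp_neg_integrableOn_Ioi t hl).integrable_indicator measurableSet_Ioi).integrableOn
          hm.aestronglyMeasurable ((ae_restrict_iff' measurableSet_Ioi).2
            (Eventually.of_forall hb))).trans ?_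
        gcongr
    _ = ε * (D / (D + 1)) := by field_simp
    _ ≤ ε := mul_le_of_le_one_right hε.le ((div_le_one (by linarith)).2 (by linarith))

end Resolvent

end MarkovSemigroup

theorem stmt_8_general {E : Type*} [MetricSpace E]
    [MeasurableSpace E] [BorelSpace E]
    (κ : ℝ → Kernel E E)
    (hk : ∀ t, 0 ≤ t → IsMarkovKernel (κ t))
    (hsemi : ∀ t s, 0 ≤ t → 0 ≤ s → κ (t + s) = (κ s).comp (κ t))
    (hjm : ∀ g : E → ℝ, Measurable g → (∃ D, ∀ x, |g x| ≤ D) →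
      Measurable fun p : ℝ × E => Usg κ p.1 g p.2)
    (l : ℝ) (hl : 0 < l)
    (hR : ∀ f : E → ℝ, MemC0 f → MemC0 (Res κ l f))
    (hdense : ∀ f : E → ℝ, MemC0 f → ∀ ε : ℝ, 0 < ε →
      ∃ g : E → ℝ, MemC0 g ∧ ∀ x, |Res κ l g x - f x| ≤ ε) :
    ∀ t : ℝ, 0 ≤ t → ∀ f : E → ℝ, MemC0 f → MemC0 (Usg κ t f) := by
  intro t ht f hf
  refine MemC0.of_forall_approx fun ε hε => ?_
  obtain ⟨g, hg, hgf⟩ := hdense f hf ε hε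
  obtain ⟨Dg, -, hDg⟩ := hg.exists_bound
  obtain ⟨Df, -, hDf⟩ := hf.exists_bound
  have hgm : Measurable g := hg.1.measurable
  refine ⟨Usg κ t (Res κ l g), memC0_usg_res hk hsemi hjm hl hR ht hg, fun x => ?_⟩
  rw [← usg_sub hk ht (measurable_res hjm l hgm hDg) (abs_res_le hk hjm hl hgm hDg)
    hf.1.measurable hDf]
  exact abs_usg_le hk ht hgf x

/-- If `R_λ` maps `C₀(E)` into itself for some `λ > 0` and the range `R C₀(E)` is dense
in `C₀(E)` (w.r.t. the sup norm), then `U_t` maps `C₀(E)` into itself for all `t ≥ 0`. -/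
theorem stmt_8 {E : Type*} [MetricSpace E] [LocallyCompactSpace E]
    [TopologicalSpace.SeparableSpace E] [MeasurableSpace E] [BorelSpace E]
    (κ : ℝ → Kernel E E)
    (hk : ∀ t, 0 ≤ t → IsMarkovKernel (κ t))
    (hsemi : ∀ t s, 0 ≤ t → 0 ≤ s → κ (t + s) = (κ s).comp (κ t))
    (hjm : ∀ g : E → ℝ, Measurable g → (∃ D, ∀ x, |g x| ≤ D) →
      Measurable fun p : ℝ × E => Usg κ p.1 g p.2)
    (l : ℝ) (hl : 0 < l)
    (hR : ∀ f : E → ℝ, MemC0 f → MemC0 (Res κ l f))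
    (hdense : ∀ f : E → ℝ, MemC0 f → ∀ ε : ℝ, 0 < ε →
      ∃ g : E → ℝ, MemC0 g ∧ ∀ x, |Res κ l g x - f x| ≤ ε) :
    ∀ t : ℝ, 0 ≤ t → ∀ f : E → ℝ, MemC0 f → MemC0 (Usg κ t f) :=
  stmt_8_general κ hk hsemi hjm l hl hR hdense
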